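/- Let G be the group of order p^{2r+1}·2^n described in the context and let K be a subgroup of P with K normal in P, K ≠ P, and P/K cyclic. Assume that for no j with 1 ≤ j ≤ 2^{n−1} does K contain the subgroup generated by x, y₁^{k^j}z₁, …, y_r^{k^j}z_r, and assume that K contains the subgroup generated by x, y₁, …, y_r or K contains the subgroup generated by x, z₁, …, z_r. Then N_G(K) equals the subgroup generated by P and a, and (P,K) is a strong Shoda pair of G. -/

import Mathlib

open scoped Classical

namespace Paper

variable {G : Type*} [Group G] [Fintype G]

noncomputable instance : Fintype (Subgroup G) :=
  Fintype.ofInjective (fun H : Subgroup G => (H : Set G)) SetLike.coe_injective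

/-- `M̂ = (1/|M|) ∑_{m ∈ M} m` in the rational group algebra `ℚ[G]`. -/
noncomputable def hat (M : Subgroup G) : MonoidAlgebra ℚ G :=
  (Nat.card M : ℚ)⁻¹ • ∑ m : M, MonoidAlgebra.of ℚ G (m : G)

/-- `L` is a normal subgroup of `H` properly containing `K`. -/
def NormalOver (H K L : Subgroup G) : Prop :=
  L ≤ H ∧ K < L ∧ ∀ h ∈ H, ∀ g ∈ L, h⁻¹ * g * h ∈ L

/-- `L` is minimal among the normal subgroups of `H` properly containing `K`. -/
def MinimalOver (H K L : Subgroup G) : Prop :=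
  NormalOver H K L ∧ ∀ L' : Subgroup G, NormalOver H K L' → L' ≤ L → L' = L

/-- `ε(H,K) = K̂` if `H = K`, and otherwise `∏_L (K̂ - L̂)`, the product running over
the normal subgroups `L` of `H` minimal with respect to properly containing `K`
(all such factors commute pairwise, so the product is order-independent). -/
noncomputable def eps (H K : Subgroup G) : MonoidAlgebra ℚ G :=
  if H = K then hat K
  else (({L : Subgroup G | MinimalOver H K L}.toFinset).toList.map
    fun L => hat K - hat L).prod

/-- The subgroup `[H,g] = ⟨g⁻¹h⁻¹gh : h ∈ H⟩`. -/
def commSub (H : Subgroup G) (g : G) : Subgroup G :=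
  Subgroup.closure {c : G | ∃ h ∈ H, c = g⁻¹ * h⁻¹ * g * h}

/-- The quotient `H/K` is cyclic (elementwise formulation: some `h ∈ H` is such that
every `g ∈ H` lies in a coset `h^m K`). -/
def CyclicQuot (H K : Subgroup G) : Prop :=
  ∃ h ∈ H, ∀ g ∈ H, ∃ m : ℤ, (h ^ m)⁻¹ * g ∈ K

/-- `K` is normal in `H` (elementwise formulation). -/
def NormalIn (H K : Subgroup G) : Prop :=
  ∀ h ∈ H, ∀ g ∈ K, h⁻¹ * g * h ∈ K

/-- `(H,K)` is a Shoda pair of `G`. -/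
def IsShodaPair (H K : Subgroup G) : Prop :=
  K ≤ H ∧ NormalIn H K ∧ CyclicQuot H K ∧
    ∀ g : G, commSub H g ⊓ H ≤ K → g ∈ H

/-- `(H,K)` is a strong Shoda pair of `G`: conditions (SS1), (SS2), (SS3).
Maximal abelianness of `H/K` in `N_G(K)/K` is phrased via the Galois correspondence
between subgroups of `N_G(K)/K` and subgroups of `G` lying between `K` and `N_G(K)`. -/
def IsStrongShodaPair (H K : Subgroup G) : Prop :=
  -- (SS1): `H` is a normal subgroup of `N_G(K)`
  (H ≤ Subgroup.normalizer (K : Set G) ∧ ∀ g ∈ Subgroup.normalizer (K : Set G), ∀ h ∈ H, g⁻¹ * h * g ∈ H) ∧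
  -- (SS2): `H/K` is cyclic and a maximal abelian subgroup of `N_G(K)/K`
  (CyclicQuot H K ∧
    (∀ h₁ ∈ H, ∀ h₂ ∈ H, h₁⁻¹ * h₂⁻¹ * h₁ * h₂ ∈ K) ∧
    ∀ C : Subgroup G, K ≤ C → C ≤ Subgroup.normalizer (K : Set G) →
      (∀ c₁ ∈ C, ∀ c₂ ∈ C, c₁⁻¹ * c₂⁻¹ * c₁ * c₂ ∈ K) → H ≤ C → C = H) ∧
  -- (SS3): `ε(H,K)·(g⁻¹ ε(H,K) g) = 0` for `g ∉ N_G(K)`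
  (∀ g : G, g ∉ Subgroup.normalizer (K : Set G) →
    eps H K * (MonoidAlgebra.of ℚ G g⁻¹ * eps H K * MonoidAlgebra.of ℚ G g) = 0)

/-- The data of the group `G = P ⋊ D_{2^n}` of order `p^{2r+1}·2^n`: an odd prime
`p ≡ 1 (mod 4)`, `r ≥ 1`, `n ≥ 3` with `2^{n-1}` the exact power of `2` dividing
`p - 1`, an integer `k` of multiplicative order `2^{n-1}` modulo `p` with inverse `q`
modulo `p`, and generators `x, y₁, …, y_r, z₁, …, z_r, a, b` of `G` subject to the
listed relations (commutator convention `[u,v] = u⁻¹v⁻¹uv`). -/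
structure GData (G : Type*) [Group G] [Fintype G] where
  p : ℕ
  r : ℕ
  n : ℕ
  k : ℕ
  q : ℕ
  x : G
  y : Fin r → G
  z : Fin r → G
  a : G
  b : G
  hp : p.Prime
  hp4 : p % 4 = 1
  hr : 1 ≤ r
  hn : 3 ≤ n
  hdvd : 2 ^ (n - 1) ∣ p - 1
  hndvd : ¬ 2 ^ n ∣ p - 1
  hordk : orderOf ((k : ZMod p)) = 2 ^ (n - 1)
  hkq : ((k : ZMod p)) * (q : ZMod p) = 1
  hcard : Fintype.card G = p ^ (2 * r + 1) * 2 ^ n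
  hgen : Subgroup.closure (({x, a, b} : Set G) ∪ Set.range y ∪ Set.range z) = ⊤
  hxp : x ^ p = 1
  hyp : ∀ i, y i ^ p = 1
  hzp : ∀ i, z i ^ p = 1
  han : a ^ 2 ^ (n - 1) = 1
  hb2 : b ^ 2 = 1
  hxy : ∀ i, x⁻¹ * (y i)⁻¹ * x * y i = 1
  hxz : ∀ i, x⁻¹ * (z i)⁻¹ * x * z i = 1
  hyy : ∀ i j, (y i)⁻¹ * (y j)⁻¹ * y i * y j = 1
  hzz : ∀ i j, (z i)⁻¹ * (z j)⁻¹ * z i * z j = 1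
  hyz : ∀ i, (y i)⁻¹ * (z i)⁻¹ * y i * z i = x
  hyz' : ∀ i j, i ≠ j → (y i)⁻¹ * (z j)⁻¹ * y i * z j = 1
  hax : a⁻¹ * x⁻¹ * a * x = 1
  hay : ∀ i, a⁻¹ * (y i)⁻¹ * a * y i = (y i) ^ (1 - (k : ℤ))
  haz : ∀ i, a⁻¹ * (z i)⁻¹ * a * z i = (z i) ^ (1 - (q : ℤ))
  hbx : b⁻¹ * x⁻¹ * b * x = x ^ 2
  hby : ∀ i, b⁻¹ * (y i)⁻¹ * b * y i = z i * y i
  hbz : ∀ i, b⁻¹ * (z i)⁻¹ * b * z i = y i * z i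
  hba : b⁻¹ * a⁻¹ * b * a = a ^ 2

variable {G : Type*} [Group G] [Fintype G]

/-- The subgroup `P = ⟨x, y₁, …, y_r, z₁, …, z_r⟩` of `G`. -/
def GData.P (d : GData G) : Subgroup G :=
  Subgroup.closure (({d.x} : Set G) ∪ Set.range d.y ∪ Set.range d.z)

end Paper

/-!
By the symmetry `(x, y, z, k, q) ↦ (x⁻¹, z, y, q, k)` of the presentation we may assume
`x, y₁, …, y_r ∈ K`. Then `P = Z Y` with `Z = ⟨z₁, …, z_r⟩` abelian of exponent `p` normalizing
`Y = ⟨x, y₁, …, y_r⟩ ≤ K`, so the cyclic group `P/K` has exponent `p` and `K` is a maximal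
subgroup of `P`. Conjugation by `a` normalizes `Y` and is the `q`-th power map on `Z`, hence
normalizes `K`, while `b` sends `zᵢ` to `yᵢ⁻¹ ∈ K` and so does not; thus `N_G(K) = P⟨a⟩`.
A power `aˢ` commuting modulo `K` with some `zᵢ ∉ K` satisfies `q^s ≡ 1 (mod p)`, hence
`2^{n-1} ∣ s` and `aˢ = 1`: this is the maximality of `P/K` among abelian subgroups of
`N_G(K)/K`. Finally `ε(P,K) = K̂ - P̂`, and for `g ∉ N_G(K)` the conjugate `M = g⁻¹Kg` is another
maximal subgroup of `P`, normalized by `P`, so `K̂ M̂ = P̂` and `(K̂ - P̂)(M̂ - P̂) = 0`.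
-/

namespace Paper

open Subgroup MonoidAlgebra

section GroupLemmas

variable {G : Type*} [Group G]

theorem inv_mul_inv_mul_mul_eq_one_iff {u v : G} : u⁻¹ * v⁻¹ * u * v = 1 ↔ Commute u v := by
  rw [commute_iff_eq, mul_assoc, mul_assoc, inv_mul_eq_one, eq_inv_mul_iff_mul_eq]
  exact eq_comm

theorem inv_mul_mul_eq_of_inv_mul_inv_mul_mul_eq {u v w : G} (h : u⁻¹ * v⁻¹ * u * v = w) :
    u⁻¹ * v * u = v * w⁻¹ := by
  rw [← h]; group

theorem commute_of_mem_closure {s : Set G} (hs : ∀ t ∈ s, ∀ t' ∈ s, Commute t t') {u v : G}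
    (hu : u ∈ closure s) (hv : v ∈ closure s) : Commute u v :=
  have := isMulCommutative_closure fun t ht t' ht' => (hs t ht t' ht').eq
  setLike_mul_comm hu hv

theorem pow_eq_one_of_mem_closure {s : Set G} (hs : ∀ t ∈ s, ∀ t' ∈ s, Commute t t') {m : ℕ}
    (hm : ∀ t ∈ s, t ^ m = 1) {v : G} (hv : v ∈ closure s) : v ^ m = 1 := by
  induction hv using closure_induction with
  | mem t ht => exact hm t ht
  | one => exact one_pow m
  | mul u w hu hw ihu ihw => rw [(commute_of_mem_closure hs hu hw).mul_pow, ihu, ihw, one_mul]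
  | inv u _ ihu => rw [inv_pow, ihu, inv_one]

theorem conj_eq_pow_of_mem_closure {s : Set G} (hs : ∀ t ∈ s, ∀ t' ∈ s, Commute t t') {g : G}
    {m : ℕ} (hg : ∀ t ∈ s, g⁻¹ * t * g = t ^ m) {v : G} (hv : v ∈ closure s) :
    g⁻¹ * v * g = v ^ m := by
  induction hv using closure_induction with
  | mem t ht => exact hg t ht
  | one => simp
  | mul u w hu hw ihu ihw =>
    rw [(commute_of_mem_closure hs hu hw).mul_pow, ← ihu, ← ihw]; group
  | inv u _ ihu => rw [inv_pow, ← ihu]; group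

theorem conj_pow_eq_pow_pow {g t : G} {m : ℕ} (h : g⁻¹ * t * g = t ^ m) (s : ℕ) :
    (g ^ s)⁻¹ * t * g ^ s = t ^ m ^ s := by
  induction s with
  | zero => simp
  | succ s ih =>
    have hconj : g⁻¹ * t ^ m ^ s * g = (g⁻¹ * t * g) ^ m ^ s := by
      simpa using (conj_pow (a := g⁻¹) (b := t) (i := m ^ s)).symm
    calc (g ^ (s + 1))⁻¹ * t * g ^ (s + 1) = g⁻¹ * ((g ^ s)⁻¹ * t * g ^ s) * g := by group
      _ = t ^ m ^ (s + 1) := by rw [ih, hconj, h, ← pow_mul, pow_succ']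

theorem mem_of_pow_mem_of_zpow_mem {H : Subgroup G} {g : G} {p : ℕ} (hp : p.Prime)
    (hgp : g ^ p ∈ H) {m : ℤ} (hgm : g ^ m ∈ H) (hm : ¬ (p : ℤ) ∣ m) : g ∈ H := by
  obtain ⟨u, v, huv⟩ := (Nat.prime_iff_prime_int.mp hp).coprime_iff_not_dvd.2 hm
  rw [← zpow_one g, ← huv, zpow_add, mul_comm u, mul_comm v, zpow_mul, zpow_mul]
  exact mul_mem (zpow_mem (by exact_mod_cast hgp) u) (zpow_mem hgm v)

theorem closure_insert_inv (g : G) (s : Set G) :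
    closure (insert g⁻¹ s) = closure (insert g s) := by
  have key : ∀ (g : G) (s : Set G), closure (insert g⁻¹ s) ≤ closure (insert g s) :=
    fun g s => (closure_le _).2 <|
      Set.insert_subset (inv_mem (subset_closure (Set.mem_insert g s)))
        ((Set.subset_insert g s).trans subset_closure)
  exact le_antisymm (key g s) (by simpa using key g⁻¹ s)

variable [Finite G]

theorem mem_normalizer_of_conj_mem {K : Subgroup G} {g : G} (h : ∀ κ ∈ K, g⁻¹ * κ * g ∈ K) :
    g ∈ normalizer (K : Set G) :=
  inv_mem_iff.1 <| mem_normalizer_fintype fun κ hκ => by simpa using h κ hκ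

theorem mem_normalizer_closure {s : Set G} {g : G} (h : ∀ t ∈ s, g⁻¹ * t * g ∈ closure s) :
    g ∈ normalizer (closure s : Set G) :=
  mem_normalizer_of_conj_mem fun _ hκ => by
    simpa using (closure_le (K := (closure s).comap (MulAut.conj g⁻¹).toMonoidHom)).2
      (fun t ht => by simpa using h t ht) hκ

end GroupLemmas

section Quotients

variable {G : Type*} [Group G] {P K : Subgroup G}

theorem NormalIn.le_normalizer (hK : NormalIn P K) : P ≤ normalizer (K : Set G) := by
  refine fun w hw => mem_normalizer_iff''.2 fun κ => ⟨hK w hw κ, fun h => ?_⟩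
  simpa [mul_assoc] using hK w⁻¹ (inv_mem hw) _ h

theorem NormalIn.inv_pow_mul_pow_mul_mem (hK : NormalIn P K) {v u : G} (hv : v ∈ P)
    (hu : u ∈ K) (n : ℕ) : (v ^ n)⁻¹ * (v * u) ^ n ∈ K := by
  induction n with
  | zero => simp
  | succ n ih =>
    have e : (v ^ (n + 1))⁻¹ * (v * u) ^ (n + 1) = v⁻¹ * ((v ^ n)⁻¹ * (v * u) ^ n) * v * u := by
      rw [pow_succ, pow_succ]; group
    rw [e]
    exact mul_mem (hK v hv _ ih) hu

theorem CyclicQuot.commutator_mem (hc : CyclicQuot P K) (hK : NormalIn P K) {w₁ w₂ : G}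
    (hw₁ : w₁ ∈ P) (hw₂ : w₂ ∈ P) : w₁⁻¹ * w₂⁻¹ * w₁ * w₂ ∈ K := by
  obtain ⟨h, hP, hgen⟩ := hc
  obtain ⟨m₁, hk₁⟩ := hgen w₁ hw₁
  obtain ⟨m₂, hk₂⟩ := hgen w₂ hw₂
  set c₁ := h ^ m₁
  set c₂ := h ^ m₂
  set k₁ := c₁⁻¹ * w₁
  set k₂ := c₂⁻¹ * w₂
  have hcomm : c₁⁻¹ * c₂⁻¹ * c₁ * c₂ = 1 :=
    inv_mul_inv_mul_mul_eq_one_iff.2 ((Commute.refl h).zpow_zpow m₁ m₂)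
  have e : w₁⁻¹ * w₂⁻¹ * w₁ * w₂ =
      k₁⁻¹ * (c₁⁻¹ * k₂⁻¹ * c₁) * (c₁⁻¹ * c₂⁻¹ * c₁ * c₂) * (c₂⁻¹ * k₁ * c₂) * k₂ := by
    simp only [k₁, k₂]; group
  rw [e, hcomm, mul_one]
  exact mul_mem (mul_mem (mul_mem (inv_mem hk₁) (hK _ (zpow_mem hP _) _ (inv_mem hk₂)))
    (hK _ (zpow_mem hP _) _ hk₁)) hk₂

theorem CyclicQuot.covBy {p : ℕ} (hc : CyclicQuot P K) (hp : p.Prime)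
    (hpow : ∀ w ∈ P, w ^ p ∈ K) (hKP : K < P) : K ⋖ P := by
  obtain ⟨h, hP, hgen⟩ := hc
  refine ⟨hKP, fun L hKL hLP => ?_⟩
  obtain ⟨g, hgL, hgK⟩ := SetLike.exists_of_lt hKL
  obtain ⟨m, hm⟩ := hgen g (hLP.le hgL)
  have hmL : h ^ m ∈ L := by simpa using mul_mem hgL (inv_mem (hKL.le hm))
  have hm_ndvd : ¬ (p : ℤ) ∣ m := by
    rintro ⟨c, rfl⟩
    refine hgK ?_
    simpa [zpow_mul] using mul_mem (zpow_mem (hpow h hP) c) hm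
  have hL : h ∈ L := mem_of_pow_mem_of_zpow_mem hp (hKL.le (hpow h hP)) hmL hm_ndvd
  refine hLP.not_ge fun w hw => ?_
  obtain ⟨m', hm'⟩ := hgen w hw
  simpa using mul_mem (zpow_mem hL m') (hKL.le hm')

end Quotients

section GroupAlgebra

variable {G : Type*} [Group G] [Fintype G]

theorem hat_mul_eq_self {A : Subgroup G} {X : MonoidAlgebra ℚ G}
    (h : ∀ g ∈ A, of ℚ G g * X = X) : hat A * X = X := by
  rw [hat, smul_mul_assoc, Finset.sum_mul, Finset.sum_congr rfl fun (m : A) _ => h m m.2,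
    Finset.sum_const, Finset.card_univ, ← Nat.card_eq_fintype_card, ← Nat.cast_smul_eq_nsmul ℚ,
    smul_smul, inv_mul_cancel₀ (by exact_mod_cast Nat.card_pos.ne'), one_smul]

theorem mul_hat_eq_self {A : Subgroup G} {X : MonoidAlgebra ℚ G}
    (h : ∀ g ∈ A, X * of ℚ G g = X) : X * hat A = X := by
  rw [hat, mul_smul_comm, Finset.mul_sum, Finset.sum_congr rfl fun (m : A) _ => h m m.2,
    Finset.sum_const, Finset.card_univ, ← Nat.card_eq_fintype_card, ← Nat.cast_smul_eq_nsmul ℚ,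
    smul_smul, inv_mul_cancel₀ (by exact_mod_cast Nat.card_pos.ne'), one_smul]

theorem of_mul_hat {A : Subgroup G} {g : G} (hg : g ∈ A) : of ℚ G g * hat A = hat A := by
  rw [hat, mul_smul_comm, Finset.mul_sum]
  congr 1
  refine Fintype.sum_equiv (Equiv.mulLeft (⟨g, hg⟩ : A)) _ _ fun m => ?_
  rw [← map_mul]; rfl

theorem hat_mul_of {A : Subgroup G} {g : G} (hg : g ∈ A) : hat A * of ℚ G g = hat A := by
  rw [hat, smul_mul_assoc, Finset.sum_mul]
  congr 1
  refine Fintype.sum_equiv (Equiv.mulRight (⟨g, hg⟩ : A)) _ _ fun m => ?_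
  rw [← map_mul]; rfl

theorem hat_mul_hat_of_ge {A B : Subgroup G} (h : B ≤ A) : hat A * hat B = hat A :=
  mul_hat_eq_self fun _ hg => hat_mul_of (h hg)

theorem hat_mul_hat_of_le {A B : Subgroup G} (h : A ≤ B) : hat A * hat B = hat B :=
  hat_mul_eq_self fun _ hg => of_mul_hat (h hg)

theorem of_inv_mul_hat_mul_of (g : G) (A : Subgroup G) :
    of ℚ G g⁻¹ * hat A * of ℚ G g = hat (A.map (MulAut.conj g⁻¹)) := by
  let e := (MulAut.conj g⁻¹).subgroupMap A
  rw [hat, hat, ← Nat.card_congr e.toEquiv, mul_smul_comm, smul_mul_assoc, Finset.mul_sum,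
    Finset.sum_mul]
  congr 1
  refine Fintype.sum_equiv e.toEquiv _ _ fun m => ?_
  rw [← map_mul, ← map_mul]
  simp [e]

theorem of_mul_hat_comm {A : Subgroup G} {g : G} (hg : g ∈ normalizer (A : Set G)) :
    of ℚ G g * hat A = hat A * of ℚ G g := by
  have hconj := of_inv_mul_hat_mul_of g A
  rw [mem_normalizer_iff_map_conj_eq.1 (inv_mem hg)] at hconj
  calc of ℚ G g * hat A = of ℚ G g * (of ℚ G g⁻¹ * hat A * of ℚ G g) := by rw [hconj]
    _ = hat A * of ℚ G g := by
      rw [← mul_assoc, ← mul_assoc, ← map_mul, mul_inv_cancel, map_one, one_mul]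

theorem hat_mul_hat_eq_hat_sup {K M : Subgroup G} (hM : M ≤ normalizer (K : Set G)) :
    hat K * hat M = hat (K ⊔ M) := by
  have hfix : ∀ g ∈ K ⊔ M, of ℚ G g * (hat K * hat M) = hat K * hat M := by
    intro g hg
    rw [← closure_eq K, ← closure_eq M, ← Subgroup.closure_union] at hg
    induction hg using closure_induction with
    | mem g hg =>
      rcases hg with hgK | hgM
      · rw [← mul_assoc, of_mul_hat hgK]
      · rw [← mul_assoc, of_mul_hat_comm (hM hgM), mul_assoc, of_mul_hat hgM]
    | one => rw [map_one, one_mul]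
    | mul g g' _ _ ih ih' => rw [map_mul, mul_assoc, ih', ih]
    | inv g _ ih =>
      conv_lhs => rw [← ih, ← mul_assoc, ← map_mul, inv_mul_cancel, map_one, one_mul]
  calc hat K * hat M = hat (K ⊔ M) * (hat K * hat M) := (hat_mul_eq_self hfix).symm
    _ = hat (K ⊔ M) := by
      rw [← mul_assoc, hat_mul_hat_of_ge le_sup_left, hat_mul_hat_of_ge le_sup_right]

variable {P K : Subgroup G}

theorem eps_eq_hat_sub_hat (hKP : K ⋖ P) : eps P K = hat K - hat P := by
  have hmin : {L : Subgroup G | MinimalOver P K L} = {P} := by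
    ext L
    refine ⟨fun ⟨⟨hLP, hKL, _⟩, _⟩ => (hKP.eq_or_eq hKL.le hLP).resolve_left hKL.ne', ?_⟩
    rintro rfl
    refine ⟨⟨le_rfl, hKP.lt, fun h hh g hg => mul_mem (mul_mem (inv_mem hh) hg) hh⟩,
      fun L ⟨hLP, hKL, _⟩ _ => (hKP.eq_or_eq hKL.le hLP).resolve_left hKL.ne'⟩
  rw [eps, if_neg hKP.ne', Set.toFinset_congr hmin, Set.toFinset_singleton,
    Finset.toList_singleton, List.map_singleton, List.prod_singleton]

theorem hat_sub_hat_mul_conj_eq_zero [P.Normal] (hKP : K ⋖ P) (hK : NormalIn P K) {g : G}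
    (hg : g ∉ normalizer (K : Set G)) :
    (hat K - hat P) * (of ℚ G g⁻¹ * (hat K - hat P) * of ℚ G g) = 0 := by
  set M := K.map (MulAut.conj g⁻¹ : G →* G)
  have hPconj : P.map (MulAut.conj g⁻¹ : G →* G) = P :=
    mem_normalizer_iff_map_conj_eq.1 (normalizer_eq_top (H := P) ▸ mem_top g⁻¹)
  have hMP : M ≤ P := (map_mono hKP.le).trans hPconj.le
  have hMK : ¬ M ≤ K := fun h =>
    hg (mem_normalizer_of_conj_mem fun κ hκ => h (by simpa [M] using hκ))
  have hKM : K ⊔ M = P :=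
    (hKP.eq_or_eq le_sup_left (sup_le hKP.le hMP)).resolve_left (left_lt_sup.2 hMK).ne'
  have hprod : hat K * hat M = hat P := by
    rw [hat_mul_hat_eq_hat_sup (hMP.trans hK.le_normalizer), hKM]
  have hconj : of ℚ G g⁻¹ * (hat K - hat P) * of ℚ G g = hat M - hat P := by
    rw [mul_sub, sub_mul, of_inv_mul_hat_mul_of, of_inv_mul_hat_mul_of, hPconj]
  rw [hconj]
  simp only [mul_sub, sub_mul, hprod, hat_mul_hat_of_le hKP.le, hat_mul_hat_of_ge hMP,
    hat_mul_hat_of_ge le_rfl, sub_self]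

end GroupAlgebra

namespace GData

variable {G : Type*} [Group G] [Fintype G] (d : GData G)

theorem commute_x_y (i : Fin d.r) : Commute d.x (d.y i) :=
  inv_mul_inv_mul_mul_eq_one_iff.1 (d.hxy i)

theorem commute_x_z (i : Fin d.r) : Commute d.x (d.z i) :=
  inv_mul_inv_mul_mul_eq_one_iff.1 (d.hxz i)

theorem commute_z_z (i j : Fin d.r) : Commute (d.z i) (d.z j) :=
  inv_mul_inv_mul_mul_eq_one_iff.1 (d.hzz i j)

theorem commute_y_z_of_ne {i j : Fin d.r} (hij : i ≠ j) : Commute (d.y i) (d.z j) :=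
  inv_mul_inv_mul_mul_eq_one_iff.1 (d.hyz' i j hij)

theorem commute_a_x : Commute d.a d.x := inv_mul_inv_mul_mul_eq_one_iff.1 d.hax

theorem a_inv_mul_y_mul_a (i : Fin d.r) : d.a⁻¹ * d.y i * d.a = d.y i ^ d.k := by
  rw [inv_mul_mul_eq_of_inv_mul_inv_mul_mul_eq (d.hay i), ← zpow_natCast]; group

theorem a_inv_mul_z_mul_a (i : Fin d.r) : d.a⁻¹ * d.z i * d.a = d.z i ^ d.q := by
  rw [inv_mul_mul_eq_of_inv_mul_inv_mul_mul_eq (d.haz i), ← zpow_natCast]; group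

theorem b_inv_mul_x_mul_b : d.b⁻¹ * d.x * d.b = d.x⁻¹ := by
  rw [inv_mul_mul_eq_of_inv_mul_inv_mul_mul_eq d.hbx]; group

theorem b_inv_mul_y_mul_b (i : Fin d.r) : d.b⁻¹ * d.y i * d.b = (d.z i)⁻¹ := by
  rw [inv_mul_mul_eq_of_inv_mul_inv_mul_mul_eq (d.hby i)]; group

theorem b_inv_mul_z_mul_b (i : Fin d.r) : d.b⁻¹ * d.z i * d.b = (d.y i)⁻¹ := by
  rw [inv_mul_mul_eq_of_inv_mul_inv_mul_mul_eq (d.hbz i)]; group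

theorem b_inv_mul_a_mul_b : d.b⁻¹ * d.a * d.b = d.a⁻¹ := by
  rw [inv_mul_mul_eq_of_inv_mul_inv_mul_mul_eq d.hba]; group

theorem z_inv_mul_y_mul_z (i : Fin d.r) : (d.z i)⁻¹ * d.y i * d.z i = d.y i * d.x := by
  rw [← d.hyz i]; group

theorem orderOf_q : orderOf (d.q : ZMod d.p) = 2 ^ (d.n - 1) := by
  let u : (ZMod d.p)ˣ := Units.mkOfMulEqOne _ _ d.hkq
  rw [← d.hordk, show (d.q : ZMod d.p) = ↑u⁻¹ from rfl, show (d.k : ZMod d.p) = ↑u from rfl,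
    orderOf_units, orderOf_units, orderOf_inv]

def swap : GData G where
  p := d.p
  r := d.r
  n := d.n
  k := d.q
  q := d.k
  x := d.x⁻¹
  y := d.z
  z := d.y
  a := d.a
  b := d.b
  hp := d.hp
  hp4 := d.hp4
  hr := d.hr
  hn := d.hn
  hdvd := d.hdvd
  hndvd := d.hndvd
  hordk := d.orderOf_q
  hkq := mul_comm (d.k : ZMod d.p) d.q ▸ d.hkq
  hcard := d.hcard
  hgen := by
    rw [Set.insert_union, Set.insert_union, closure_insert_inv, ← Set.insert_union,
      ← Set.insert_union, Set.union_right_comm]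
    exact d.hgen
  hxp := by rw [inv_pow, d.hxp, inv_one]
  hyp := d.hzp
  hzp := d.hyp
  han := d.han
  hb2 := d.hb2
  hxy i := inv_mul_inv_mul_mul_eq_one_iff.2 (d.commute_x_z i).inv_left
  hxz i := inv_mul_inv_mul_mul_eq_one_iff.2 (d.commute_x_y i).inv_left
  hyy := d.hzz
  hzz := d.hyy
  hyz i := by rw [← d.hyz i]; group
  hyz' i j hij := inv_mul_inv_mul_mul_eq_one_iff.2 (d.commute_y_z_of_ne hij.symm).symm
  hax := inv_mul_inv_mul_mul_eq_one_iff.2 d.commute_a_x.inv_right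
  hay := d.haz
  haz := d.hay
  hbx := by rw [inv_inv, d.b_inv_mul_x_mul_b]; group
  hby := d.hbz
  hbz := d.hby
  hba := d.hba

theorem swap_P : d.swap.P = d.P := by
  simp only [P, swap]
  rw [Set.singleton_union, Set.insert_union, closure_insert_inv, ← Set.insert_union,
    ← Set.singleton_union, Set.union_right_comm]

def Y : Subgroup G := closure ({d.x} ∪ Set.range d.y)

def Z : Subgroup G := closure (Set.range d.z)

theorem x_mem_P : d.x ∈ d.P := subset_closure (by simp)

theorem y_mem_P (i : Fin d.r) : d.y i ∈ d.P := subset_closure (by simp)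

theorem z_mem_P (i : Fin d.r) : d.z i ∈ d.P := subset_closure (by simp)

theorem x_mem_Y : d.x ∈ d.Y := subset_closure (by simp)

theorem y_mem_Y (i : Fin d.r) : d.y i ∈ d.Y := subset_closure (by simp)

theorem P_eq_Y_sup_Z : d.P = d.Y ⊔ d.Z := Subgroup.closure_union _ _

theorem Z_le_P : d.Z ≤ d.P := d.P_eq_Y_sup_Z ▸ le_sup_right

theorem Z_le_normalizer_Y : d.Z ≤ normalizer (d.Y : Set G) := by
  refine (closure_le _).2 ?_
  rintro _ ⟨j, rfl⟩
  refine mem_normalizer_closure ?_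
  rintro _ (hx | ⟨i, rfl⟩)
  · rw [Set.mem_singleton_iff.1 hx, (d.commute_x_z j).symm.inv_mul_cancel]
    exact d.x_mem_Y
  · by_cases hij : i = j
    · rw [← hij, z_inv_mul_y_mul_z]
      exact mul_mem (d.y_mem_Y i) d.x_mem_Y
    · rw [(d.commute_y_z_of_ne hij).symm.inv_mul_cancel]
      exact d.y_mem_Y i

theorem pow_p_eq_one_of_mem_Z {v : G} (hv : v ∈ d.Z) : v ^ d.p = 1 :=
  pow_eq_one_of_mem_closure (by rintro _ ⟨i, rfl⟩ _ ⟨j, rfl⟩; exact d.commute_z_z i j)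
    (by rintro _ ⟨i, rfl⟩; exact d.hzp i) hv

theorem a_inv_mul_mul_a_of_mem_Z {v : G} (hv : v ∈ d.Z) : d.a⁻¹ * v * d.a = v ^ d.q :=
  conj_eq_pow_of_mem_closure (by rintro _ ⟨i, rfl⟩ _ ⟨j, rfl⟩; exact d.commute_z_z i j)
    (by rintro _ ⟨i, rfl⟩; exact d.a_inv_mul_z_mul_a i) hv

theorem exists_mem_Z_mul_mem_Y {w : G} (hw : w ∈ d.P) : ∃ v ∈ d.Z, ∃ u ∈ d.Y, w = v * u := by
  rw [← SetLike.mem_coe, d.P_eq_Y_sup_Z, sup_comm,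
    coe_mul_of_left_le_normalizer_right _ _ d.Z_le_normalizer_Y] at hw
  obtain ⟨v, hv, u, hu, rfl⟩ := hw
  exact ⟨v, hv, u, hu, rfl⟩

theorem a_mem_normalizer_Y : d.a ∈ normalizer (d.Y : Set G) := by
  refine mem_normalizer_closure ?_
  rintro _ (hx | ⟨i, rfl⟩)
  · rw [Set.mem_singleton_iff.1 hx, d.commute_a_x.inv_mul_cancel]
    exact d.x_mem_Y
  · rw [a_inv_mul_y_mul_a]
    exact pow_mem (d.y_mem_Y i) _

theorem P_normal : d.P.Normal := by
  refine normalizer_eq_top_iff.1 (top_unique ?_)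
  rw [← d.hgen, closure_le]
  rintro g ((((rfl | rfl | rfl) | ⟨i, rfl⟩)) | ⟨i, rfl⟩)
  · exact le_normalizer d.x_mem_P
  · refine mem_normalizer_closure ?_
    rintro _ ((hx | ⟨i, rfl⟩) | ⟨i, rfl⟩)
    · rw [Set.mem_singleton_iff.1 hx, d.commute_a_x.inv_mul_cancel]
      exact d.x_mem_P
    · rw [a_inv_mul_y_mul_a]
      exact pow_mem (d.y_mem_P i) _
    · rw [a_inv_mul_z_mul_a]
      exact pow_mem (d.z_mem_P i) _
  · refine mem_normalizer_closure ?_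
    rintro _ ((hx | ⟨i, rfl⟩) | ⟨i, rfl⟩)
    · rw [Set.mem_singleton_iff.1 hx, b_inv_mul_x_mul_b]
      exact inv_mem d.x_mem_P
    · rw [b_inv_mul_y_mul_b]
      exact inv_mem (d.z_mem_P i)
    · rw [b_inv_mul_z_mul_b]
      exact inv_mem (d.y_mem_P i)
  · exact le_normalizer (d.y_mem_P i)
  · exact le_normalizer (d.z_mem_P i)

theorem P_sup_a_normal : (d.P ⊔ closure {d.a}).Normal := by
  have := d.P_normal
  have hb : d.b ∈ normalizer ((d.P ⊔ closure {d.a} : Subgroup G) : Set G) := by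
    rw [← closure_eq d.P, ← Subgroup.closure_union]
    refine mem_normalizer_closure ?_
    rintro t (ht | rfl)
    · exact subset_closure (Or.inl (by simpa using this.conj_mem t ht d.b⁻¹))
    · rw [b_inv_mul_a_mul_b]
      exact inv_mem (subset_closure (Or.inr rfl))
  refine normalizer_eq_top_iff.1 (top_unique ?_)
  rw [← d.hgen, closure_le]
  rintro g ((((rfl | rfl | rfl) | ⟨i, rfl⟩)) | ⟨i, rfl⟩)
  · exact le_normalizer (mem_sup_left d.x_mem_P)
  · exact le_normalizer (mem_sup_right (subset_closure rfl))
  · exact hb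
  · exact le_normalizer (mem_sup_left (d.y_mem_P i))
  · exact le_normalizer (mem_sup_left (d.z_mem_P i))

theorem exists_mem_P_sup_a (g : G) : ∃ h ∈ d.P ⊔ closure {d.a}, g = h ∨ g = h * d.b := by
  have := d.P_sup_a_normal
  have htop : ⊤ ≤ d.P ⊔ closure {d.a} ⊔ closure {d.b} := by
    rw [← d.hgen, closure_le]
    rintro g ((((rfl | rfl | rfl) | ⟨i, rfl⟩)) | ⟨i, rfl⟩)
    · exact mem_sup_left (mem_sup_left d.x_mem_P)
    · exact mem_sup_left (mem_sup_right (subset_closure rfl))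
    · exact mem_sup_right (subset_closure rfl)
    · exact mem_sup_left (mem_sup_left (d.y_mem_P i))
    · exact mem_sup_left (mem_sup_left (d.z_mem_P i))
  have hg := htop (mem_top g)
  rw [← SetLike.mem_coe, normal_mul] at hg
  obtain ⟨h, hh, β, hβ, rfl⟩ := hg
  dsimp only
  obtain ⟨m, rfl⟩ := mem_closure_singleton.1 hβ
  refine ⟨h, hh, ?_⟩
  obtain ⟨t, rfl | rfl⟩ := Int.even_or_odd' m
  · left; rw [zpow_mul, zpow_ofNat, d.hb2, one_zpow, mul_one]
  · right; rw [zpow_add, zpow_mul, zpow_ofNat, d.hb2, one_zpow, one_mul, zpow_one]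

theorem exists_mem_P_mul_pow_a {c : G} (hc : c ∈ d.P ⊔ closure {d.a}) :
    ∃ w ∈ d.P, ∃ s : ℕ, c = w * d.a ^ s := by
  have := d.P_normal
  rw [← SetLike.mem_coe, normal_mul] at hc
  obtain ⟨w, hw, α, hα, rfl⟩ := hc
  rw [SetLike.mem_coe, ← zpowers_eq_closure, ← mem_powers_iff_mem_zpowers] at hα
  obtain ⟨s, rfl⟩ := hα
  exact ⟨w, hw, s, rfl⟩

theorem pow_a_eq_one_of_commutator_mem {K : Subgroup G} {i : Fin d.r} (hz : d.z i ∉ K) {s : ℕ}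
    (h : (d.a ^ s)⁻¹ * (d.z i)⁻¹ * d.a ^ s * d.z i ∈ K) : d.a ^ s = 1 := by
  have hconj := conj_pow_eq_pow_pow (d.a_inv_mul_z_mul_a i) s
  have hmem : d.z i ^ ((1 : ℤ) - (d.q ^ s : ℕ)) ∈ K := by
    convert h using 1
    rw [sub_eq_neg_add, zpow_add, zpow_one, zpow_neg, zpow_natCast, ← hconj]
    group
  have hdvd : (d.p : ℤ) ∣ 1 - (d.q ^ s : ℕ) := by
    by_contra hndvd
    exact hz (mem_of_pow_mem_of_zpow_mem d.hp (by rw [d.hzp i]; exact one_mem K) hmem hndvd)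
  have hq : (d.q : ZMod d.p) ^ s = 1 := by
    have := (ZMod.intCast_zmod_eq_zero_iff_dvd _ _).2 hdvd
    push_cast at this
    exact (sub_eq_zero.1 this).symm
  obtain ⟨t, rfl⟩ : 2 ^ (d.n - 1) ∣ s := d.orderOf_q ▸ orderOf_dvd_of_pow_eq_one hq
  rw [pow_mul, d.han, one_pow]

variable {K : Subgroup G}

theorem Y_le_of_mem (hx : d.x ∈ K) (hy : ∀ i, d.y i ∈ K) : d.Y ≤ K := by
  refine (closure_le _).2 ?_
  rintro _ (h | ⟨i, rfl⟩)
  · rwa [Set.mem_singleton_iff.1 h]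
  · exact hy i

theorem pow_p_mem (hK : NormalIn d.P K) (hx : d.x ∈ K) (hy : ∀ i, d.y i ∈ K) {w : G}
    (hw : w ∈ d.P) : w ^ d.p ∈ K := by
  obtain ⟨v, hv, u, hu, rfl⟩ := d.exists_mem_Z_mul_mem_Y hw
  simpa [d.pow_p_eq_one_of_mem_Z hv] using
    hK.inv_pow_mul_pow_mul_mem (d.Z_le_P hv) (d.Y_le_of_mem hx hy hu) d.p

theorem a_mem_normalizer (hKP : K ≤ d.P) (hx : d.x ∈ K) (hy : ∀ i, d.y i ∈ K) :
    d.a ∈ normalizer (K : Set G) := by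
  refine mem_normalizer_of_conj_mem fun κ hκ => ?_
  obtain ⟨v, hv, u, hu, rfl⟩ := d.exists_mem_Z_mul_mem_Y (hKP hκ)
  have hvK : v ∈ K := by simpa using mul_mem hκ (inv_mem (d.Y_le_of_mem hx hy hu))
  have e : d.a⁻¹ * (v * u) * d.a = (d.a⁻¹ * v * d.a) * (d.a⁻¹ * u * d.a) := by group
  rw [e, d.a_inv_mul_mul_a_of_mem_Z hv]
  have hu' : d.a⁻¹ * u * d.a ∈ d.Y := (mem_normalizer_iff''.1 d.a_mem_normalizer_Y u).1 hu
  exact mul_mem (pow_mem hvK _) (d.Y_le_of_mem hx hy hu')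

theorem exists_z_not_mem (hKP : K ≤ d.P) (hKne : K ≠ d.P) (hx : d.x ∈ K)
    (hy : ∀ i, d.y i ∈ K) : ∃ i, d.z i ∉ K := by
  by_contra! hz
  refine hKne (le_antisymm hKP ((closure_le _).2 ?_))
  rintro _ ((h | ⟨i, rfl⟩) | ⟨i, rfl⟩)
  · rwa [Set.mem_singleton_iff.1 h]
  · exact hy i
  · exact hz i

theorem b_not_mem_normalizer (hKP : K ≤ d.P) (hKne : K ≠ d.P) (hx : d.x ∈ K)
    (hy : ∀ i, d.y i ∈ K) : d.b ∉ normalizer (K : Set G) := by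
  intro hb
  obtain ⟨i, hi⟩ := d.exists_z_not_mem hKP hKne hx hy
  refine hi ((mem_normalizer_iff''.1 hb _).2 ?_)
  rw [b_inv_mul_z_mul_b]
  exact inv_mem (hy i)

theorem normalizer_eq (hKP : K ≤ d.P) (hK : NormalIn d.P K) (hKne : K ≠ d.P) (hx : d.x ∈ K)
    (hy : ∀ i, d.y i ∈ K) : normalizer (K : Set G) = d.P ⊔ closure {d.a} := by
  have hle : d.P ⊔ closure {d.a} ≤ normalizer (K : Set G) :=
    sup_le hK.le_normalizer ((closure_le _).2 (Set.singleton_subset_iff.2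
      (d.a_mem_normalizer hKP hx hy)))
  refine le_antisymm (fun g hg => ?_) hle
  obtain ⟨h, hh, rfl | rfl⟩ := d.exists_mem_P_sup_a g
  · exact hh
  · exact absurd (by simpa using mul_mem (inv_mem (hle hh)) hg)
      (d.b_not_mem_normalizer hKP hKne hx hy)

theorem eq_P_of_commutator_mem (hKP : K ≤ d.P) (hK : NormalIn d.P K) (hKne : K ≠ d.P)
    (hx : d.x ∈ K) (hy : ∀ i, d.y i ∈ K) {C : Subgroup G} (hCN : C ≤ normalizer (K : Set G))
    (hC : ∀ c₁ ∈ C, ∀ c₂ ∈ C, c₁⁻¹ * c₂⁻¹ * c₁ * c₂ ∈ K) (hPC : d.P ≤ C) : C = d.P := by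
  refine le_antisymm (fun c hc => ?_) hPC
  obtain ⟨w, hw, s, rfl⟩ :=
    d.exists_mem_P_mul_pow_a (d.normalizer_eq hKP hK hKne hx hy ▸ hCN hc)
  obtain ⟨i, hi⟩ := d.exists_z_not_mem hKP hKne hx hy
  have has : d.a ^ s ∈ C := by simpa using mul_mem (inv_mem (hPC hw)) hc
  rw [d.pow_a_eq_one_of_commutator_mem hi (hC _ has _ (hPC (d.z_mem_P i))), mul_one]
  exact hw

theorem normalizer_eq_and_isStrongShodaPair (hKP : K ≤ d.P) (hK : NormalIn d.P K)
    (hKne : K ≠ d.P) (hcyc : CyclicQuot d.P K) (hx : d.x ∈ K) (hy : ∀ i, d.y i ∈ K) :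
    normalizer (K : Set G) = d.P ⊔ closure {d.a} ∧ IsStrongShodaPair d.P K := by
  have := d.P_normal
  have hcov : K ⋖ d.P :=
    hcyc.covBy d.hp (fun _ hw => d.pow_p_mem hK hx hy hw) (lt_of_le_of_ne hKP hKne)
  refine ⟨d.normalizer_eq hKP hK hKne hx hy,
    ⟨hK.le_normalizer, fun g _ h hh => by simpa using this.conj_mem h hh g⁻¹⟩,
    ⟨hcyc, fun _ h₁ _ h₂ => hcyc.commutator_mem hK h₁ h₂,
      fun _ _ hCN hC hPC => d.eq_P_of_commutator_mem hKP hK hKne hx hy hCN hC hPC⟩,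
    fun g hg => ?_⟩
  rw [eps_eq_hat_sub_hat hcov]
  exact hat_sub_hat_mul_conj_eq_zero hcov hK hg

end GData

end Paper

theorem stmt13_general {G : Type*} [Group G] [Fintype G] (d : Paper.GData G)
    (K : Subgroup G) (hKP : K ≤ d.P) (hKnormal : Paper.NormalIn d.P K) (hKne : K ≠ d.P)
    (hcyc : Paper.CyclicQuot d.P K)
    (hyz : Subgroup.closure (({d.x} : Set G) ∪ Set.range d.y) ≤ K ∨
      Subgroup.closure (({d.x} : Set G) ∪ Set.range d.z) ≤ K) :
    Subgroup.normalizer (K : Set G) = d.P ⊔ Subgroup.closure {d.a} ∧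
    Paper.IsStrongShodaPair d.P K := by
  rcases hyz with hY | hZ
  · exact d.normalizer_eq_and_isStrongShodaPair hKP hKnormal hKne hcyc
      (hY (Subgroup.subset_closure (Or.inl rfl)))
      fun i => hY (Subgroup.subset_closure (Or.inr ⟨i, rfl⟩))
  · rw [← d.swap_P] at hKP hKnormal hKne hcyc ⊢
    exact d.swap.normalizer_eq_and_isStrongShodaPair hKP hKnormal hKne hcyc
      (inv_mem (hZ (Subgroup.subset_closure (Or.inl rfl))))
      fun i => hZ (Subgroup.subset_closure (Or.inr ⟨i, rfl⟩))

/-- Let `K ⊴ P`, `K ≠ P`, with `P/K` cyclic, such that `K` contains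
none of the subgroups `⟨x, y₁^{k^j}z₁, …, y_r^{k^j}z_r⟩` (`1 ≤ j ≤ 2^{n-1}`), and such
that `⟨x, y₁, …, y_r⟩ ≤ K` or `⟨x, z₁, …, z_r⟩ ≤ K`.  Then `N_G(K) = ⟨P, a⟩` and
`(P,K)` is a strong Shoda pair of `G`. -/
theorem stmt13 {G : Type*} [Group G] [Fintype G] (d : Paper.GData G)
    (K : Subgroup G) (hKP : K ≤ d.P) (hKnormal : Paper.NormalIn d.P K) (hKne : K ≠ d.P)
    (hcyc : Paper.CyclicQuot d.P K)
    (hnj : ¬ ∃ j, 1 ≤ j ∧ j ≤ 2 ^ (d.n - 1) ∧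
      Subgroup.closure (({d.x} : Set G) ∪ Set.range fun i => d.y i ^ d.k ^ j * d.z i) ≤ K)
    (hyz : Subgroup.closure (({d.x} : Set G) ∪ Set.range d.y) ≤ K ∨
      Subgroup.closure (({d.x} : Set G) ∪ Set.range d.z) ≤ K) :
    Subgroup.normalizer (K : Set G) = d.P ⊔ Subgroup.closure {d.a} ∧
    Paper.IsStrongShodaPair d.P K :=
  stmt13_general d K hKP hKnormal hKne hcyc hyz
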